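/- Parallel extension preserves links for α-rules: let π₀ be a GS3 open proof-tree linked via μ₀ to (T₀, σ), where T₀ is an initial part of a closed tableau T with ground unifier σ. If T₁ extends T₀ at open leaf b by an α-rule on formula A, then the proof-tree π₁ obtained from π₀ by applying the corresponding GS3 α-rule on σA at every open leaf s with μ₀(s) = b is linked to (T₁, σ). -/

import Mathlib

/-- First-order terms: de Bruijn bound variables, free (meta)variables, function applications. -/
inductive Tm : Type
  | var : ℕ → Tm
  | mvar : ℕ → Tm
  | fn : ℕ → List Tm → Tm

/-- First-order formulas (de Bruijn representation for quantifiers). -/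
inductive Fm : Type
  | atom : ℕ → List Tm → Fm
  | neg : Fm → Fm
  | and : Fm → Fm → Fm
  | or : Fm → Fm → Fm
  | imp : Fm → Fm → Fm
  | all : Fm → Fm
  | ex : Fm → Fm

mutual
/-- Apply a substitution of metavariables to a term. -/
def substTm (σ : ℕ → Tm) : Tm → Tm
  | .var n => .var n
  | .mvar X => σ X
  | .fn f ts => .fn f (substTms σ ts)
def substTms (σ : ℕ → Tm) : List Tm → List Tm
  | [] => []
  | t :: ts => substTm σ t :: substTms σ ts
end

mutual
/-- Replace bound variable `k` by the term `u` (assumed closed), shifting down. -/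
def instTm (u : Tm) (k : ℕ) : Tm → Tm
  | .var n => if n = k then u else if k < n then .var (n - 1) else .var n
  | .mvar X => .mvar X
  | .fn f ts => .fn f (instTms u k ts)
def instTms (u : Tm) (k : ℕ) : List Tm → List Tm
  | [] => []
  | t :: ts => instTm u k t :: instTms u k ts
end

mutual
/-- Metavariables occurring in a term. -/
def mvarsTm : Tm → List ℕ
  | .var _ => []
  | .mvar X => [X]
  | .fn _ ts => mvarsTms ts
def mvarsTms : List Tm → List ℕ
  | [] => []
  | t :: ts => mvarsTm t ++ mvarsTms ts
end

def Fm.substF (σ : ℕ → Tm) : Fm → Fm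
  | .atom P ts => .atom P (substTms σ ts)
  | .neg A => .neg (A.substF σ)
  | .and A B => .and (A.substF σ) (B.substF σ)
  | .or A B => .or (A.substF σ) (B.substF σ)
  | .imp A B => .imp (A.substF σ) (B.substF σ)
  | .all A => .all (A.substF σ)
  | .ex A => .ex (A.substF σ)

def Fm.instF (u : Tm) (k : ℕ) : Fm → Fm
  | .atom P ts => .atom P (instTms u k ts)
  | .neg A => .neg (A.instF u k)
  | .and A B => .and (A.instF u k) (B.instF u k)
  | .or A B => .or (A.instF u k) (B.instF u k)
  | .imp A B => .imp (A.instF u k) (B.instF u k)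
  | .all A => .all (A.instF u (k + 1))
  | .ex A => .ex (A.instF u (k + 1))

/-- Instantiate the outermost bound variable of a quantified formula body. -/
def Fm.inst1 (u : Tm) (A : Fm) : Fm := A.instF u 0

def Fm.mvarsF : Fm → List ℕ
  | .atom _ ts => mvarsTms ts
  | .neg A => A.mvarsF
  | .and A B => A.mvarsF ++ B.mvarsF
  | .or A B => A.mvarsF ++ B.mvarsF
  | .imp A B => A.mvarsF ++ B.mvarsF
  | .all A => A.mvarsF
  | .ex A => A.mvarsF

/-- Occurrence of a subterm satisfying `P` inside a term. -/
inductive OccT (P : Tm → Prop) : Tm → Prop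
  | here {t} : P t → OccT P t
  | arg {f ts t} : t ∈ ts → OccT P t → OccT P (.fn f ts)

/-- Occurrence of a subterm satisfying `P` inside a formula. -/
inductive OccF (P : Tm → Prop) : Fm → Prop
  | atom {n ts t} : t ∈ ts → OccT P t → OccF P (.atom n ts)
  | neg {A} : OccF P A → OccF P (.neg A)
  | andL {A B} : OccF P A → OccF P (.and A B)
  | andR {A B} : OccF P B → OccF P (.and A B)
  | orL {A B} : OccF P A → OccF P (.or A B)
  | orR {A B} : OccF P B → OccF P (.or A B)
  | impL {A B} : OccF P A → OccF P (.imp A B)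
  | impR {A B} : OccF P B → OccF P (.imp A B)
  | all {A} : OccF P A → OccF P (.all A)
  | ex {A} : OccF P A → OccF P (.ex A)

/-- The function/constant symbol `c` occurs in the term. -/
def SymInTm (c : ℕ) : Tm → Prop := OccT (fun u => ∃ ts, u = .fn c ts)
/-- The function/constant symbol `c` occurs in the formula. -/
def SymInFm (c : ℕ) : Fm → Prop := OccF (fun u => ∃ ts, u = .fn c ts)
/-- The metavariable `X` occurs in the formula. -/
def MvarInFm (X : ℕ) : Fm → Prop := OccF (fun u => u = .mvar X)
/-- The term `u` occurs as a subterm in the formula. -/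
def TmInFm (u : Tm) : Fm → Prop := OccF (fun v => v = u)

/-- GS3: one-sided, cut-free sequent calculus with implicit contraction and
explicit weakening; `GS3 Δ` means the sequent `Δ ⊢` is derivable. -/
inductive GS3 : Multiset Fm → Prop
  | ax {Δ A} : A ∈ Δ → Fm.neg A ∈ Δ → GS3 Δ
  | weak {Δ A} : GS3 Δ → GS3 (A ::ₘ Δ)
  | andE {Δ A B} : Fm.and A B ∈ Δ → GS3 (A ::ₘ B ::ₘ Δ) → GS3 Δ
  | negOrE {Δ A B} : Fm.neg (Fm.or A B) ∈ Δ → GS3 (Fm.neg A ::ₘ Fm.neg B ::ₘ Δ) → GS3 Δ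
  | negImpE {Δ A B} : Fm.neg (Fm.imp A B) ∈ Δ → GS3 (A ::ₘ Fm.neg B ::ₘ Δ) → GS3 Δ
  | negNegE {Δ A} : Fm.neg (Fm.neg A) ∈ Δ → GS3 (A ::ₘ Δ) → GS3 Δ
  | orE {Δ A B} : Fm.or A B ∈ Δ → GS3 (A ::ₘ Δ) → GS3 (B ::ₘ Δ) → GS3 Δ
  | impE {Δ A B} : Fm.imp A B ∈ Δ → GS3 (Fm.neg A ::ₘ Δ) → GS3 (B ::ₘ Δ) → GS3 Δ
  | negAndE {Δ A B} : Fm.neg (Fm.and A B) ∈ Δ → GS3 (Fm.neg A ::ₘ Δ) → GS3 (Fm.neg B ::ₘ Δ) → GS3 Δ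
  | allE {Δ A} (t : Tm) : Fm.all A ∈ Δ → GS3 (Fm.inst1 t A ::ₘ Δ) → GS3 Δ
  | negExE {Δ A} (t : Tm) : Fm.neg (Fm.ex A) ∈ Δ → GS3 (Fm.neg (Fm.inst1 t A) ::ₘ Δ) → GS3 Δ
  | exE {Δ A} (c : ℕ) : Fm.ex A ∈ Δ → (∀ B ∈ Δ, ¬ SymInFm c B) →
      GS3 (Fm.inst1 (Tm.fn c []) A ::ₘ Δ) → GS3 Δ
  | negAllE {Δ A} (c : ℕ) : Fm.neg (Fm.all A) ∈ Δ → (∀ B ∈ Δ, ¬ SymInFm c B) →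
      GS3 (Fm.neg (Fm.inst1 (Tm.fn c []) A) ::ₘ Δ) → GS3 Δ
/-- A rule application label (shared between tableaux and GS3 proof-trees). -/
inductive RuleApp : Type
  | andR (A B : Fm) | negOrR (A B : Fm) | negImpR (A B : Fm) | negNegR (A : Fm)
  | orR (A B : Fm) | impR (A B : Fm) | negAndR (A B : Fm)
  | allR (A : Fm) (t : Tm) | negExR (A : Fm) (t : Tm)
  | exR (A : Fm) (t : Tm) | negAllR (A : Fm) (t : Tm)
  | closureR (A B : Fm)
  | weakR (Δ' : Multiset Fm)

/-- The premises (children multisets) generated by a rule applied to `Δ`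
(rules are non-destructive: the principal formula is kept). -/
def RuleApp.kids (Δ : Multiset Fm) : RuleApp → List (Multiset Fm)
  | .andR A B => [A ::ₘ B ::ₘ Δ]
  | .negOrR A B => [Fm.neg A ::ₘ Fm.neg B ::ₘ Δ]
  | .negImpR A B => [A ::ₘ Fm.neg B ::ₘ Δ]
  | .negNegR A => [A ::ₘ Δ]
  | .orR A B => [A ::ₘ Δ, B ::ₘ Δ]
  | .impR A B => [Fm.neg A ::ₘ Δ, B ::ₘ Δ]
  | .negAndR A B => [Fm.neg A ::ₘ Δ, Fm.neg B ::ₘ Δ]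
  | .allR A t => [Fm.inst1 t A ::ₘ Δ]
  | .negExR A t => [Fm.neg (Fm.inst1 t A) ::ₘ Δ]
  | .exR A t => [Fm.inst1 t A ::ₘ Δ]
  | .negAllR A t => [Fm.neg (Fm.inst1 t A) ::ₘ Δ]
  | .closureR _ _ => []
  | .weakR Δ' => [Δ']

def RuleApp.isClosure : RuleApp → Prop
  | .closureR _ _ => True
  | _ => False

def RuleApp.isAlpha : RuleApp → Prop
  | .andR _ _ | .negOrR _ _ | .negImpR _ _ | .negNegR _ => True
  | _ => False

def RuleApp.isBeta : RuleApp → Prop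
  | .orR _ _ | .impR _ _ | .negAndR _ _ => True
  | _ => False

def RuleApp.isDelta : RuleApp → Prop
  | .exR _ _ | .negAllR _ _ => True
  | _ => False

/-- Instantiation of a rule application by a substitution of metavariables. -/
def RuleApp.substR (σ : ℕ → Tm) : RuleApp → RuleApp
  | .andR A B => .andR (A.substF σ) (B.substF σ)
  | .negOrR A B => .negOrR (A.substF σ) (B.substF σ)
  | .negImpR A B => .negImpR (A.substF σ) (B.substF σ)
  | .negNegR A => .negNegR (A.substF σ)
  | .orR A B => .orR (A.substF σ) (B.substF σ)
  | .impR A B => .impR (A.substF σ) (B.substF σ)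
  | .negAndR A B => .negAndR (A.substF σ) (B.substF σ)
  | .allR A t => .allR (A.substF σ) (substTm σ t)
  | .negExR A t => .negExR (A.substF σ) (substTm σ t)
  | .exR A t => .exR (A.substF σ) (substTm σ t)
  | .negAllR A t => .negAllR (A.substF σ) (substTm σ t)
  | .closureR A B => .closureR (A.substF σ) (B.substF σ)
  | .weakR Δ' => .weakR (Δ'.map (Fm.substF σ))

/-- Trees of multisets of formulas: `leaf` is an *open* leaf; internal nodes are
labelled with the rule applied there (a `closureR` node with no children is a closed leaf). -/
inductive FTree : Type
  | leaf : Multiset Fm → FTree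
  | node : Multiset Fm → RuleApp → List FTree → FTree

def FTree.root : FTree → Multiset Fm
  | .leaf Δ => Δ
  | .node Δ _ _ => Δ

/-- The subtree at a path (children indexed by position). -/
def FTree.subAt (t : FTree) : List ℕ → Option FTree
  | [] => some t
  | i :: p =>
    match t with
    | .leaf _ => none
    | .node _ _ ts =>
      match ts[i]? with
      | some t' => t'.subAt p
      | none => none

/-- The multiset at an open leaf located at the given path, if any. -/
def FTree.openLeafAt (t : FTree) (p : List ℕ) : Option (Multiset Fm) :=
  match t.subAt p with
  | some (.leaf Δ) => some Δ
  | _ => none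

/-- The rule applied at the node located at the given path, if any. -/
def FTree.ruleAt (t : FTree) (p : List ℕ) : Option RuleApp :=
  match t.subAt p with
  | some (.node _ r _) => some r
  | _ => none

/-- A tree is closed when it has no open leaves. -/
def FTree.closedT (t : FTree) : Prop := ∀ p Δ, t.subAt p ≠ some (.leaf Δ)

/-- Extend a tree by applying rule `r` at the open leaf located at path `p`. -/
def FTree.extend (r : RuleApp) : List ℕ → FTree → FTree
  | [], .leaf Δ => .node Δ r ((r.kids Δ).map .leaf)
  | [], t => t
  | _ :: _, .leaf Δ => .leaf Δ
  | i :: p, .node Δ r' ts => .node Δ r' (ts.modify i (FTree.extend r p))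
  termination_by p _ => p.length

/-- Well-formed trees w.r.t. a side-condition `Ok` on rule applications:
children carry exactly the premises generated by the rule. -/
inductive WFT (Ok : Multiset Fm → RuleApp → Prop) : FTree → Prop
  | leaf {Δ} : WFT Ok (.leaf Δ)
  | node {Δ r ts} : Ok Δ r → ts.map FTree.root = r.kids Δ →
      (∀ t ∈ ts, WFT Ok t) → WFT Ok (.node Δ r ts)

/-- Side conditions of GS3: principal formula present, genuinely fresh
constants in δ-rules, arbitrary terms in γ-rules, axiom on `A, ¬A`. -/
def okGS3 : Multiset Fm → RuleApp → Prop
  | Δ, .andR A B => Fm.and A B ∈ Δ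
  | Δ, .negOrR A B => Fm.neg (Fm.or A B) ∈ Δ
  | Δ, .negImpR A B => Fm.neg (Fm.imp A B) ∈ Δ
  | Δ, .negNegR A => Fm.neg (Fm.neg A) ∈ Δ
  | Δ, .orR A B => Fm.or A B ∈ Δ
  | Δ, .impR A B => Fm.imp A B ∈ Δ
  | Δ, .negAndR A B => Fm.neg (Fm.and A B) ∈ Δ
  | Δ, .allR A _ => Fm.all A ∈ Δ
  | Δ, .negExR A _ => Fm.neg (Fm.ex A) ∈ Δ
  | Δ, .exR A t => Fm.ex A ∈ Δ ∧ ∃ c, t = Tm.fn c [] ∧ ∀ B ∈ Δ, ¬ SymInFm c B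
  | Δ, .negAllR A t => Fm.neg (Fm.all A) ∈ Δ ∧ ∃ c, t = Tm.fn c [] ∧ ∀ B ∈ Δ, ¬ SymInFm c B
  | Δ, .closureR A B => A ∈ Δ ∧ B ∈ Δ ∧ B = Fm.neg A
  | Δ, .weakR Δ' => Δ' ⊆ Δ

/-- Side conditions of free-variable tableaux with on-the-fly inner
Skolemization, relative to the global unifier `σ`: γ-rules use fresh
metavariables, δ-rules use a fresh Skolem symbol applied to the metavariables
of the Skolemized formula, closure needs the two formulas to be σ-opposite. -/
def okTabFV (σ : ℕ → Tm) : Multiset Fm → RuleApp → Prop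
  | Δ, .andR A B => Fm.and A B ∈ Δ
  | Δ, .negOrR A B => Fm.neg (Fm.or A B) ∈ Δ
  | Δ, .negImpR A B => Fm.neg (Fm.imp A B) ∈ Δ
  | Δ, .negNegR A => Fm.neg (Fm.neg A) ∈ Δ
  | Δ, .orR A B => Fm.or A B ∈ Δ
  | Δ, .impR A B => Fm.imp A B ∈ Δ
  | Δ, .negAndR A B => Fm.neg (Fm.and A B) ∈ Δ
  | Δ, .allR A t => Fm.all A ∈ Δ ∧ ∃ X, t = Tm.mvar X ∧ ∀ B ∈ Δ, ¬ MvarInFm X B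
  | Δ, .negExR A t => Fm.neg (Fm.ex A) ∈ Δ ∧ ∃ X, t = Tm.mvar X ∧ ∀ B ∈ Δ, ¬ MvarInFm X B
  | Δ, .exR A t => Fm.ex A ∈ Δ ∧
      ∃ f, t = Tm.fn f (((Fm.ex A).mvarsF.dedup).map Tm.mvar) ∧ ∀ B ∈ Δ, ¬ SymInFm f B
  | Δ, .negAllR A t => Fm.neg (Fm.all A) ∈ Δ ∧
      ∃ f, t = Tm.fn f (((Fm.neg (Fm.all A)).mvarsF.dedup).map Tm.mvar) ∧ ∀ B ∈ Δ, ¬ SymInFm f B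
  | Δ, .closureR A B => A ∈ Δ ∧ B ∈ Δ ∧ Fm.substF σ B = Fm.neg (Fm.substF σ A)
  | _, .weakR _ => False

/-- Initial part of a tree (same root and rules up to some open leaves;
a closed leaf of `T` may not be replaced by an open leaf). -/
inductive Initial : FTree → FTree → Prop
  | leafLeaf {Δ} : Initial (.leaf Δ) (.leaf Δ)
  | openLeaf {Δ r ts} : ¬ r.isClosure → Initial (.leaf Δ) (.node Δ r ts)
  | node {Δ r ts₀ ts} : ts₀.length = ts.length →
      (∀ (i : ℕ) t₀ t, ts₀[i]? = some t₀ → ts[i]? = some t → Initial t₀ t) →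
      Initial (.node Δ r ts₀) (.node Δ r ts)

/-- A (total) link from an open GS3 proof-tree `π` to a tableau `T` with
unifier `σ`: each open leaf of `π` is mapped to an open leaf of `T` whose
σ-instantiated formulas all appear in the sequent of the leaf of `π`. -/
structure Link (σ : ℕ → Tm) (π T : FTree) where
  μ : List ℕ → List ℕ
  maps : ∀ p Γs, π.openLeafAt p = some Γs →
    ∃ Δ, T.openLeafAt (μ p) = some Δ ∧ ∀ A ∈ Δ, Fm.substF σ A ∈ Γs

/-- A partial link between two GS3 proof-trees. -/
structure PLink (π θ : FTree) where
  μ : List ℕ → Option (List ℕ)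
  maps : ∀ p Γs q, π.openLeafAt p = some Γs → μ p = some q →
    ∃ Δ, θ.openLeafAt q = some Δ ∧ ∀ A ∈ Δ, A ∈ Γs

/-- A bilink: two partial links with disjoint domains covering all open leaves. -/
structure Bilink (π θ₀ θ₁ : FTree) where
  l0 : PLink π θ₀
  l1 : PLink π θ₁
  disj : ∀ p, (l0.μ p).isSome → (l1.μ p).isSome → False
  cover : ∀ p Γs, π.openLeafAt p = some Γs → (l0.μ p).isSome ∨ (l1.μ p).isSome

/-- A formula appearing somewhere in a tree. -/
inductive InTree (A : Fm) : FTree → Prop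
  | leaf {Δ} : A ∈ Δ → InTree A (.leaf Δ)
  | here {Δ r ts} : A ∈ Δ → InTree A (.node Δ r ts)
  | child {Δ r ts t} : t ∈ ts → InTree A t → InTree A (.node Δ r ts)

mutual
/-- Number of rule applications in a tree. -/
def FTree.ruleCount : FTree → ℕ
  | .leaf _ => 0
  | .node _ _ ts => 1 + ruleCountL ts
def ruleCountL : List FTree → ℕ
  | [] => 0
  | t :: ts => t.ruleCount + ruleCountL ts
end

mutual
/-- Instantiate all formulas of a tree by a substitution (the naive translation). -/
def FTree.substT (σ : ℕ → Tm) : FTree → FTree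
  | .leaf Δ => .leaf (Δ.map (Fm.substF σ))
  | .node Δ r ts => .node (Δ.map (Fm.substF σ)) (r.substR σ) (substTL σ ts)
def substTL (σ : ℕ → Tm) : List FTree → List FTree
  | [] => []
  | t :: ts => t.substT σ :: substTL σ ts
end


/-!
An α-rule has a single premise, obtained by adding a fixed multiset `new` of formulas, and its
σ-instance adds `σ new`. If an open leaf `s` of `π₀` is linked to `b`, then `σ Δ_b ⊆ Γ_s` puts the
principal formula `σ A` into `Γ_s`, and gives `σ (new + Δ_b) ⊆ σ new + Γ_s`, so the unique new leaf
below `s` can be linked to the unique new leaf below `b`. Every other open leaf keeps its sequent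
and its link, since extending a tree at an open leaf changes nothing outside the subtree there.
-/

namespace FTree

lemma subAt_append (t : FTree) (p q : List ℕ) :
    t.subAt (p ++ q) = (t.subAt p).bind (·.subAt q) := by
  induction p generalizing t with
  | nil => simp [subAt]
  | cons i p ih =>
    cases t with
    | leaf Δ => simp [subAt]
    | node Δ r ts =>
      simp only [List.cons_append, subAt]
      cases ts[i]? <;> simp [ih]

lemma subAt_node_cons (Δ : Multiset Fm) (r : RuleApp) (ts : List FTree) (i : ℕ) (p : List ℕ) :
    (node Δ r ts).subAt (i :: p) = ts[i]?.bind (·.subAt p) := by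
  simp only [subAt]
  cases ts[i]? <;> rfl

lemma openLeafAt_eq_some_iff {t : FTree} {p : List ℕ} {Γ : Multiset Fm} :
    t.openLeafAt p = some Γ ↔ t.subAt p = some (leaf Γ) := by
  unfold openLeafAt
  split <;> simp_all

lemma openLeafAt_node_cons (Δ : Multiset Fm) (r : RuleApp) (ts : List FTree) (i : ℕ)
    (p : List ℕ) : (node Δ r ts).openLeafAt (i :: p) = ts[i]?.bind (·.openLeafAt p) := by
  unfold openLeafAt
  rw [subAt_node_cons]
  cases ts[i]? <;> rfl

lemma exists_of_openLeafAt_node_cons {Δ Γ : Multiset Fm} {r : RuleApp} {ts : List FTree}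
    {i : ℕ} {p : List ℕ} (h : (node Δ r ts).openLeafAt (i :: p) = some Γ) :
    ∃ t, ts[i]? = some t ∧ t.openLeafAt p = some Γ := by
  rw [openLeafAt_node_cons] at h
  exact Option.bind_eq_some_iff.mp h

lemma eq_nil_of_subAt_leaf {Γ : Multiset Fm} {p : List ℕ} {t : FTree}
    (h : (leaf Γ).subAt p = some t) : p = [] := by
  cases p with
  | nil => rfl
  | cons i p => simp [subAt] at h

lemma eq_of_prefix_of_openLeafAt {t : FTree} {p q : List ℕ} {Γ Γ' : Multiset Fm}
    (hp : t.openLeafAt p = some Γ) (hq : t.openLeafAt q = some Γ') (hpq : p <+: q) :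
    p = q := by
  obtain ⟨s, rfl⟩ := hpq
  rw [openLeafAt_eq_some_iff] at hp hq
  rw [subAt_append, hp, Option.bind_some] at hq
  simp [eq_nil_of_subAt_leaf hq]

lemma root_extend (r : RuleApp) (q : List ℕ) (t : FTree) : (t.extend r q).root = t.root := by
  cases q <;> cases t <;> simp [extend, root]

lemma map_root_modify_extend (r : RuleApp) (q : List ℕ) (ts : List FTree) (i : ℕ) :
    (ts.modify i (extend r q)).map root = ts.map root := by
  apply List.ext_getElem?
  intro j
  simp only [List.getElem?_map, List.getElem?_modify]
  cases ts[j]? <;> by_cases h : i = j <;> simp [h, root_extend]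

section Extend

variable {r : RuleApp} {q : List ℕ} {t : FTree} {Δ : Multiset Fm}

lemma subAt_extend_self (h : t.openLeafAt q = some Δ) :
    (t.extend r q).subAt q = some (node Δ r ((r.kids Δ).map leaf)) := by
  induction q generalizing t with
  | nil =>
    obtain rfl : t = leaf Δ := by simpa [openLeafAt_eq_some_iff, subAt] using h
    simp [extend, subAt]
  | cons i q ih =>
    cases t with
    | leaf Γ => simp [openLeafAt_eq_some_iff, subAt] at h
    | node Δ' r' ts =>
      obtain ⟨ti, hti, hleaf⟩ := exists_of_openLeafAt_node_cons h
      simp [extend, subAt_node_cons, hti, ih hleaf]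

lemma openLeafAt_extend_of_not_prefix {p : List ℕ} (h : t.openLeafAt q = some Δ)
    (hqp : ¬ q <+: p) : (t.extend r q).openLeafAt p = t.openLeafAt p := by
  induction q generalizing t p with
  | nil => exact absurd List.nil_prefix hqp
  | cons i q ih =>
    cases t with
    | leaf Γ => simp [openLeafAt_eq_some_iff, subAt] at h
    | node Δ' r' ts =>
      obtain ⟨ti, hti, hleaf⟩ := exists_of_openLeafAt_node_cons h
      cases p with
      | nil => simp only [extend]; rfl
      | cons j p =>
        simp only [extend, openLeafAt_node_cons, List.getElem?_modify]
        by_cases hij : i = j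
        · subst hij
          simpa [hti] using ih hleaf fun hc => hqp (List.cons_prefix_cons.mpr ⟨rfl, hc⟩)
        · simp [hij]

lemma openLeafAt_extend_append_singleton (h : t.openLeafAt q = some Δ) (i : ℕ) :
    (t.extend r q).openLeafAt (q ++ [i]) = (r.kids Δ)[i]? := by
  unfold openLeafAt
  rw [subAt_append, subAt_extend_self h, Option.bind_some, subAt_node_cons,
    List.getElem?_map]
  cases (r.kids Δ)[i]? <;> rfl

lemma openLeafAt_extend_cases {p : List ℕ} {Γ : Multiset Fm} (h : t.openLeafAt q = some Δ)
    (hp : (t.extend r q).openLeafAt p = some Γ) :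
    (t.openLeafAt p = some Γ ∧ p ≠ q) ∨ ∃ i, p = q ++ [i] ∧ (r.kids Δ)[i]? = some Γ := by
  by_cases hqp : q <+: p
  · obtain ⟨s, rfl⟩ := hqp
    right
    match s with
    | [] =>
      rw [openLeafAt_eq_some_iff, List.append_nil, subAt_extend_self h] at hp
      cases hp
    | [i] => exact ⟨i, rfl, openLeafAt_extend_append_singleton h i ▸ hp⟩
    | i :: j :: s =>
      rw [openLeafAt_eq_some_iff, subAt_append, subAt_extend_self h, Option.bind_some,
        subAt_node_cons, List.getElem?_map] at hp
      obtain ⟨_, hkid, hsub⟩ := Option.bind_eq_some_iff.mp hp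
      obtain ⟨K, -, rfl⟩ := Option.map_eq_some_iff.mp hkid
      cases eq_nil_of_subAt_leaf hsub
  · rw [openLeafAt_extend_of_not_prefix h hqp] at hp
    exact Or.inl ⟨hp, fun hc => hqp (hc ▸ List.prefix_refl q)⟩

end Extend

end FTree

lemma WFT.extend {Ok : Multiset Fm → RuleApp → Prop} {r : RuleApp} {q : List ℕ} {t : FTree}
    {Δ : Multiset Fm} (ht : WFT Ok t) (h : t.openLeafAt q = some Δ) (hok : Ok Δ r) :
    WFT Ok (t.extend r q) := by
  induction q generalizing t with
  | nil =>
    obtain rfl : t = .leaf Δ := by simpa [FTree.openLeafAt_eq_some_iff, FTree.subAt] using h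
    rw [FTree.extend]
    refine .node hok (by rw [List.map_map]; exact List.map_id _) ?_
    simp only [List.mem_map]
    rintro _ ⟨_, -, rfl⟩
    exact .leaf
  | cons i q ih =>
    cases ht with
    | leaf => simp [FTree.openLeafAt_eq_some_iff, FTree.subAt] at h
    | node hok' hroots hkids =>
      obtain ⟨ti, hti, hleaf⟩ := FTree.exists_of_openLeafAt_node_cons h
      rw [FTree.extend]
      refine .node hok' (by rw [FTree.map_root_modify_extend, hroots]) fun u hu => ?_
      obtain ⟨j, hj⟩ := List.getElem?_of_mem hu
      rw [List.getElem?_modify] at hj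
      by_cases hij : i = j
      · subst hij
        obtain rfl : ti.extend r q = u := by simpa [hti] using hj
        exact ih (hkids ti (List.mem_of_getElem? hti)) hleaf
      · simp only [hij, if_false, Option.map_eq_map, Option.map_id'] at hj
        exact hkids u (List.mem_of_getElem? hj)

section Foldr

variable {r : RuleApp} {π : FTree} {ps : List (List ℕ)}

lemma FTree.openLeafAt_foldr_extend_of_not_mem (hnd : ps.Nodup)
    (hps : ∀ q ∈ ps, ∃ Γ, π.openLeafAt q = some Γ) {p : List ℕ} {Γ : Multiset Fm}
    (hp : π.openLeafAt p = some Γ) (hpps : p ∉ ps) :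
    (ps.foldr (extend r) π).openLeafAt p = some Γ := by
  induction ps generalizing p Γ with
  | nil => exact hp
  | cons q ps ih =>
    obtain ⟨hqps, hnd⟩ := List.nodup_cons.mp hnd
    obtain ⟨Γq, hq⟩ := hps q List.mem_cons_self
    have hps' := fun x hx => hps x (List.mem_cons_of_mem q hx)
    have hq' := ih hnd hps' hq hqps
    have hp' := ih hnd hps' hp (fun hc => hpps (List.mem_cons_of_mem q hc))
    rw [List.foldr_cons, openLeafAt_extend_of_not_prefix hq', hp']
    intro hqp
    exact hpps (eq_of_prefix_of_openLeafAt hq' hp' hqp ▸ List.mem_cons_self)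

lemma FTree.openLeafAt_foldr_extend_cases (hnd : ps.Nodup)
    (hps : ∀ q ∈ ps, ∃ Γ, π.openLeafAt q = some Γ) {q : List ℕ} {Γ : Multiset Fm}
    (hq : (ps.foldr (extend r) π).openLeafAt q = some Γ) :
    (π.openLeafAt q = some Γ ∧ q ∉ ps) ∨
      ∃ p ∈ ps, ∃ Γp i, π.openLeafAt p = some Γp ∧ q = p ++ [i] ∧ (r.kids Γp)[i]? = some Γ := by
  induction ps generalizing q Γ with
  | nil => exact Or.inl ⟨hq, List.not_mem_nil⟩
  | cons p ps ih =>
    obtain ⟨hpps, hnd⟩ := List.nodup_cons.mp hnd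
    obtain ⟨Γp, hp⟩ := hps p List.mem_cons_self
    have hps' := fun x hx => hps x (List.mem_cons_of_mem p hx)
    have hp' := openLeafAt_foldr_extend_of_not_mem (r := r) hnd hps' hp hpps
    rcases openLeafAt_extend_cases hp' hq with ⟨hq', hqp⟩ | ⟨i, rfl, hi⟩
    · rcases ih hnd hps' hq' with ⟨hq₀, hqps⟩ | ⟨p', hp'ps, rest⟩
      · exact Or.inl ⟨hq₀, by simp [hqp, hqps]⟩
      · exact Or.inr ⟨p', List.mem_cons_of_mem p hp'ps, rest⟩
    · exact Or.inr ⟨p, List.mem_cons_self, Γp, i, hp, rfl, hi⟩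

lemma WFT.foldr_extend {Ok : Multiset Fm → RuleApp → Prop} (hπ : WFT Ok π) (hnd : ps.Nodup)
    (hps : ∀ q ∈ ps, ∃ Γ, π.openLeafAt q = some Γ ∧ Ok Γ r) :
    WFT Ok (ps.foldr (FTree.extend r) π) := by
  induction ps with
  | nil => exact hπ
  | cons q ps ih =>
    obtain ⟨hqps, hnd⟩ := List.nodup_cons.mp hnd
    obtain ⟨Γq, hq, hok⟩ := hps q List.mem_cons_self
    have hps' := fun x hx => hps x (List.mem_cons_of_mem q hx)
    refine (ih hnd hps').extend ?_ hok
    exact FTree.openLeafAt_foldr_extend_of_not_mem hnd (fun x hx => (hps' x hx).imp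
      fun _ => And.left) hq hqps

end Foldr

namespace RuleApp

variable {r : RuleApp}

lemma isAlpha.exists_kids_eq (h : r.isAlpha) (σ : ℕ → Tm) :
    ∃ new : Multiset Fm, ∀ Δ, r.kids Δ = [new + Δ] ∧
      (r.substR σ).kids Δ = [new.map (Fm.substF σ) + Δ] := by
  cases r with
  | andR A B => exact ⟨{A, B}, fun Δ => by simp [kids, substR]⟩
  | negOrR A B => exact ⟨{.neg A, .neg B}, fun Δ => by simp [kids, substR, Fm.substF]⟩
  | negImpR A B => exact ⟨{A, .neg B}, fun Δ => by simp [kids, substR, Fm.substF]⟩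
  | negNegR A => exact ⟨{A}, fun Δ => by simp [kids, substR]⟩
  | _ => exact h.elim

lemma isAlpha.okGS3_substR {σ : ℕ → Tm} {Δ Γ : Multiset Fm} (h : r.isAlpha)
    (hok : okTabFV σ Δ r) (hΓ : ∀ A ∈ Δ, A.substF σ ∈ Γ) : okGS3 Γ (r.substR σ) := by
  cases r <;> first | exact h.elim | exact hΓ _ hok

end RuleApp

namespace Link

variable {σ : ℕ → Tm} {π T : FTree}

lemma substF_mem_of_μ_eq (L : Link σ π T) {p b : List ℕ} {Γ Δ : Multiset Fm}
    (hp : π.openLeafAt p = some Γ) (hb : T.openLeafAt b = some Δ) (hμ : L.μ p = b) :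
    ∀ A ∈ Δ, A.substF σ ∈ Γ := by
  obtain ⟨Δ', hΔ', hsub⟩ := L.maps p Γ hp
  rw [hμ, hb] at hΔ'
  exact Option.some_injective _ hΔ' ▸ hsub

/-- An old open leaf never has its parent path in `ps`, so `q.dropLast ∈ ps` singles out the
new leaves `p ++ [0]`. -/
def extendAlpha (L : Link σ π T) {b : List ℕ} {Δ : Multiset Fm} {r : RuleApp}
    {ps : List (List ℕ)} (hb : T.openLeafAt b = some Δ) (halpha : r.isAlpha) (hnd : ps.Nodup)
    (hps : ∀ p, p ∈ ps ↔ (∃ Γ, π.openLeafAt p = some Γ) ∧ L.μ p = b) :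
    Link σ (ps.foldr (FTree.extend (r.substR σ)) π) (T.extend r b) where
  μ q := if q.dropLast ∈ ps then b ++ [0] else L.μ q
  maps q Γ hq := by
    obtain ⟨new, hkids⟩ := halpha.exists_kids_eq σ
    rcases FTree.openLeafAt_foldr_extend_cases hnd (fun p hp => ((hps p).1 hp).1) hq with
      ⟨hq, hqps⟩ | ⟨p, hpps, Γp, i, hp, rfl, hi⟩
    · have hnew : q.dropLast ∉ ps := fun hc => by
        obtain ⟨⟨Γ', hq'⟩, -⟩ := (hps _).1 hc
        exact hqps (FTree.eq_of_prefix_of_openLeafAt hq' hq q.dropLast_prefix ▸ hc)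
      obtain ⟨Δq, hΔq, hsub⟩ := L.maps q Γ hq
      refine ⟨Δq, ?_, hsub⟩
      rw [if_neg hnew, FTree.openLeafAt_extend_of_not_prefix hb, hΔq]
      intro hbq
      exact hqps ((hps q).2 ⟨⟨Γ, hq⟩, (FTree.eq_of_prefix_of_openLeafAt hb hΔq hbq).symm⟩)
    · obtain ⟨rfl, rfl⟩ : i = 0 ∧ new.map (Fm.substF σ) + Γp = Γ := by
        cases i <;> simp_all
      have hsub := L.substF_mem_of_μ_eq hp hb ((hps p).1 hpps).2
      refine ⟨new + Δ, ?_, ?_⟩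
      · rw [List.dropLast_concat, if_pos hpps, FTree.openLeafAt_extend_append_singleton hb,
          (hkids Δ).1]
        rfl
      · simp only [Multiset.mem_add, Multiset.mem_map]
        rintro A (hA | hA)
        · exact Or.inl ⟨A, hA, rfl⟩
        · exact Or.inr (hsub A hA)

end Link

/-- Parallel extension preserves links for α-rules: if the tableau `T₀`
(an initial part of the closed tableau `T` with ground unifier `σ`) is extended
at open leaf `b` by an α-rule `r`, then applying the corresponding GS3 α-rule
(instantiated by `σ`) at every open leaf of `π₀` that `μ₀` maps to `b`
yields a well-formed GS3 proof-tree linked to the extended tableau. -/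
theorem parallel_extension_alpha (σ : ℕ → Tm) (T T₀ π₀ : FTree) (L : Link σ π₀ T₀)
    (hT : WFT (okTabFV σ) T) (hTcl : T.closedT) (hini : Initial T₀ T)
    (hπ : WFT okGS3 π₀) (hroot : π₀.root = T₀.root.map (Fm.substF σ))
    (b : List ℕ) (Δ : Multiset Fm) (r : RuleApp)
    (hb : T₀.openLeafAt b = some Δ) (hrule : T.ruleAt b = some r)
    (halpha : r.isAlpha) (hok : okTabFV σ Δ r)
    (ps : List (List ℕ)) (hnd : ps.Nodup)
    (hps : ∀ p, p ∈ ps ↔ (∃ Γs, π₀.openLeafAt p = some Γs) ∧ L.μ p = b) :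
    WFT okGS3 (ps.foldr (FTree.extend (r.substR σ)) π₀) ∧
      Nonempty (Link σ (ps.foldr (FTree.extend (r.substR σ)) π₀) (FTree.extend r b T₀)) := by
  have hleaves : ∀ p ∈ ps, ∃ Γ, π₀.openLeafAt p = some Γ ∧ okGS3 Γ (r.substR σ) := by
    intro p hp
    obtain ⟨⟨Γ, hΓ⟩, hμ⟩ := (hps p).1 hp
    exact ⟨Γ, hΓ, halpha.okGS3_substR hok (L.substF_mem_of_μ_eq hΓ hb hμ)⟩
  exact ⟨hπ.foldr_extend hnd hleaves, ⟨L.extendAlpha hb halpha hnd hps⟩⟩
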